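/- arXiv:1711.08802 — 10 statements merged into one kernel-verified Lean document; each statement's English description precedes it below -/
import Mathlib

section
/- Let A be a unital C*-algebra and let (x₁, x₂) ∈ A² satisfy x₁*x₁ - x₂*x₂ = 1 with x₁ invertible. Then ‖x₂x₁⁻¹‖ < 1, i.e., x₂x₁⁻¹ lies in the open unit ball of A. -/
/-!
With `u = x₁⁻¹` and `y = x₂ u`, the relation gives `y* y = 1 - u* u`. Since `u* u` is strictly
positive (its spectrum lies in `(0, ∞)`) and `y* y ≥ 0`, the norm `‖y* y‖`, which belongs to the
spectrum of `1 - u* u`, is `1 - λ` for some `λ > 0` in the spectrum of `u* u`; hence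
`‖y‖² = ‖y* y‖ < 1`.
-/

lemma star_mul_self_mul_inverse_eq {R : Type*} [Ring R] [StarRing R] {x₁ x₂ : R}
    (hx₁ : IsUnit x₁) (h : star x₁ * x₁ - star x₂ * x₂ = 1) :
    star (x₂ * Ring.inverse x₁) * (x₂ * Ring.inverse x₁) =
      1 - star (Ring.inverse x₁) * Ring.inverse x₁ := by
  set u := Ring.inverse x₁
  have hx₂ : star x₂ * x₂ = star x₁ * x₁ - 1 := by rw [← h, sub_sub_cancel]
  have hu : star (x₁ * u) * (x₁ * u) = 1 := by
    rw [Ring.mul_inverse_cancel x₁ hx₁, star_one, one_mul]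
  calc star (x₂ * u) * (x₂ * u) = star u * (star x₂ * x₂) * u := by rw [star_mul]; noncomm_ring
    _ = star (x₁ * u) * (x₁ * u) - star u * u := by rw [hx₂, star_mul]; noncomm_ring
    _ = 1 - star u * u := by rw [hu]

lemma spectrum.one_sub_mem_of_mem_one_sub {R A : Type*} [CommRing R] [Ring A] [Algebra R A]
    {a : A} {r : R} (h : r ∈ spectrum R (1 - a)) : 1 - r ∈ spectrum R a := by
  rw [← map_one (algebraMap R A), ← spectrum.singleton_sub_eq] at h
  obtain ⟨_, rfl, s, hs, rfl⟩ := h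
  simpa using hs

lemma CStarAlgebra.norm_one_sub_lt_one {A : Type*} [CStarAlgebra A] [PartialOrder A]
    [StarOrderedRing A] {a : A} (ha : IsStrictlyPositive a) (ha₁ : a ≤ 1) : ‖1 - a‖ < 1 := by
  obtain hA | hA := subsingleton_or_nontrivial A
  · simp [Subsingleton.elim (1 - a) 0]
  have hmem : 1 - ‖1 - a‖ ∈ spectrum ℝ a :=
    spectrum.one_sub_mem_of_mem_one_sub (norm_mem_spectrum_of_nonneg (sub_nonneg.mpr ha₁))
  have hpos := (isStrictlyPositive_iff_isSelfAdjoint_and_spectrum_pos.mp ha).2 _ hmem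
  linarith

/-- If `x₁* x₁ - x₂* x₂ = 1` with `x₁` invertible, then `‖x₂ x₁⁻¹‖ < 1`. -/
theorem norm_lt_one_of_sphere {A : Type*} [CStarAlgebra A]
    (x₁ x₂ : A) (hx₁ : IsUnit x₁) (h : star x₁ * x₁ - star x₂ * x₂ = 1) :
    ‖x₂ * Ring.inverse x₁‖ < 1 := by
  -- `CStarAlgebra` carries no global order instance: use the spectral order.
  let _ := CStarAlgebra.spectralOrder A
  have _ := CStarAlgebra.spectralOrderedRing A
  set y := x₂ * Ring.inverse x₁
  set a := star (Ring.inverse x₁) * Ring.inverse x₁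
  have hy : star y * y = 1 - a := star_mul_self_mul_inverse_eq hx₁ h
  have ha : IsStrictlyPositive a :=
    CStarAlgebra.isStrictlyPositive_iff_eq_star_mul_self.mpr ⟨_, hx₁.ringInverse, rfl⟩
  have ha₁ : a ≤ 1 := sub_nonneg.mp (hy ▸ star_mul_self_nonneg y)
  have hsq : ‖y‖ * ‖y‖ < 1 := by
    rw [← CStarRing.norm_star_mul_self, hy]
    exact CStarAlgebra.norm_one_sub_lt_one ha ha₁
  nlinarith [norm_nonneg y]
end

section
/- Let A be a unital C*-algebra and x₁, x₂ ∈ A with x₁ invertible and x₁*x₁ - x₂*x₂ = 1. Then x₁ + x₂ is invertible in A. -/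
/-!
Write `x₁ = v` for a unit `v` and put `b = x₂ v⁻¹`. Conjugating the hypothesis by `v⁻¹` gives
`b* b + (v⁻¹)* v⁻¹ = 1`, so `1 - b* b` is positive and invertible; hence `1` is not in the
spectrum of `b* b`, whose norm lies in its spectrum, and `‖b‖² = ‖b* b‖ < 1`. Then `1 + b` is
invertible by the Neumann series, and so is `x₁ + x₂ = (1 + b) v`.
-/

theorem isUnit_add_of_norm_mul_inv_lt_one {R : Type*} [NormedRing R] [HasSummableGeomSeries R]
    (v : Rˣ) {x : R} (hx : ‖x * ↑v⁻¹‖ < 1) : IsUnit (↑v + x) := by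
  have h₁ : IsUnit (1 + x * ↑v⁻¹) := by
    simpa using isUnit_one_sub_of_norm_lt_one (x := -(x * ↑v⁻¹)) (by simpa using hx)
  have hfac : (1 + x * ↑v⁻¹) * ↑v = ↑v + x := by simp [add_mul, mul_assoc]
  exact hfac ▸ h₁.mul v.isUnit

theorem star_mul_inv_add_star_inv_mul_inv_eq_one {R : Type*} [Ring R] [StarRing R]
    (v : Rˣ) {x : R} (h : star ↑v * ↑v - star x * x = 1) :
    star (x * ↑v⁻¹) * (x * ↑v⁻¹) + star ↑v⁻¹ * ↑v⁻¹ = (1 : R) := by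
  have hx : star x * x = star ↑v * ↑v - 1 := by rw [← h]; abel
  have hstar : star (↑v⁻¹ : R) * star ↑v = 1 := by rw [← star_mul, Units.mul_inv, star_one]
  calc star (x * ↑v⁻¹) * (x * ↑v⁻¹) + star ↑v⁻¹ * ↑v⁻¹
      = star (↑v⁻¹ : R) * (star x * x + 1) * ↑v⁻¹ := by simp only [star_mul]; noncomm_ring
    _ = 1 := by rw [hx, sub_add_cancel, mul_assoc, mul_assoc, Units.mul_inv, mul_one, hstar]

section CStarAlgebra

variable {A : Type*} [CStarAlgebra A]

theorem CStarAlgebra.norm_lt_one_of_isUnit_one_sub [PartialOrder A] [StarOrderedRing A]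
    {a : A} (ha₀ : 0 ≤ a) (ha₁ : a ≤ 1) (hu : IsUnit (1 - a)) : ‖a‖ < 1 := by
  nontriviality A
  refine ((CStarAlgebra.norm_le_one_iff_of_nonneg a ha₀).mpr ha₁).lt_of_ne fun h => ?_
  have hmem := CStarAlgebra.norm_mem_spectrum_of_nonneg ha₀
  rw [h, spectrum.mem_iff] at hmem
  exact hmem (by simpa using hu)

theorem CStarAlgebra.norm_lt_one_of_star_mul_self_add_eq_one {a b : A} (ha : IsUnit a)
    (h : star b * b + star a * a = 1) : ‖b‖ < 1 := by
  let _ := CStarAlgebra.spectralOrder A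
  have _ := CStarAlgebra.spectralOrderedRing A
  have hsub : 1 - star b * b = star a * a := by rw [← h, add_sub_cancel_left]
  have hle : star b * b ≤ 1 := by
    rw [← h]; exact le_add_of_nonneg_right (star_mul_self_nonneg a)
  have hbb : ‖star b * b‖ < 1 :=
    norm_lt_one_of_isUnit_one_sub (star_mul_self_nonneg b) hle (hsub ▸ ha.star.mul ha)
  rw [CStarRing.norm_star_mul_self, ← sq] at hbb
  exact (sq_lt_one_iff₀ (norm_nonneg b)).mp hbb

end CStarAlgebra

/-- If `x₁* x₁ - x₂* x₂ = 1` with `x₁` invertible, then `x₁ + x₂` is invertible. -/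
theorem isUnit_add_of_sphere {A : Type*} [CStarAlgebra A]
    (x₁ x₂ : A) (hx₁ : IsUnit x₁) (h : star x₁ * x₁ - star x₂ * x₂ = 1) :
    IsUnit (x₁ + x₂) := by
  obtain ⟨v, rfl⟩ := hx₁
  exact isUnit_add_of_norm_mul_inv_lt_one v <|
    CStarAlgebra.norm_lt_one_of_star_mul_self_add_eq_one v⁻¹.isUnit
      (star_mul_inv_add_star_inv_mul_inv_eq_one v h)
end

section
/- Let A be a unital C*-algebra and let z₁, z₂ ∈ A be invertible with Im(z₂z₁⁻¹) positive and invertible. Then z₁ - i z₂ is invertible. -/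
/-!
With `w = z₂ z₁⁻¹` we have `z₁ - i z₂ = (1 - i w) z₁` and `Re (1 - i w) = 1 + Im w ≥ 1`, so it
suffices that an element `a` with strictly positive real part `r` is invertible. Writing
`c = r^{-1/2} (Im a) r^{-1/2}`, which is selfadjoint, we get `a = r^{1/2} (1 + i c) r^{1/2}`, and
`1 + i c` is invertible because the spectrum of `c` is real.
-/

/-- The imaginary part `(a - a*)/(2i)` of an element of a C*-algebra. -/
noncomputable def imPart {A : Type*} [CStarAlgebra A] (a : A) : A :=
  (2 * Complex.I)⁻¹ • (a - star a)

open Complex CFC Ring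
open scoped ComplexStarModule

section

variable {A : Type*} [CStarAlgebra A]

lemma imPart_eq_imaginaryPart (a : A) : imPart a = ℑ a := by
  rw [imPart, imaginaryPart_apply_coe, ← Complex.coe_smul, smul_smul, mul_inv, inv_I]
  push_cast
  ring_nf

lemma IsSelfAdjoint.isUnit_one_add_I_smul {c : A} (hc : IsSelfAdjoint c) :
    IsUnit (1 + I • c) := by
  have hI : IsUnit (algebraMap ℂ A I - c) :=
    spectrum.notMem_iff.mp fun h ↦ by simpa using hc.im_eq_zero_of_mem_spectrum h
  have hfactor : 1 + I • c = algebraMap ℂ A (-I) * (algebraMap ℂ A I - c) := by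
    rw [mul_sub, ← map_mul, ← Algebra.smul_def]
    simp
  rw [hfactor]
  exact ((isUnit_iff_ne_zero.mpr (neg_ne_zero.mpr I_ne_zero)).map _).mul hI

variable [PartialOrder A] [StarOrderedRing A]

lemma isUnit_of_isStrictlyPositive_realPart {a : A} (ha : IsStrictlyPositive (ℜ a : A)) :
    IsUnit a := by
  have hc : IsSelfAdjoint (conjSqrt (ℜ a : A)⁻¹ʳ (ℑ a)) := by
    have hsqrt := (IsSelfAdjoint.of_nonneg (sqrt_nonneg (ℜ a : A)⁻¹ʳ)).star_eq
    simpa only [conjSqrt_apply, hsqrt] using (ℑ a).prop.conjugate (sqrt (ℜ a : A)⁻¹ʳ)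
  have hfactor :
      a = sqrt (ℜ a : A) * (1 + I • conjSqrt (ℜ a : A)⁻¹ʳ (ℑ a)) * sqrt (ℜ a : A) := by
    conv_lhs => rw [← realPart_add_I_smul_imaginaryPart a, ← conjSqrt_one (ℜ a : A),
      ← conjSqrt_conjSqrt_ringInverse (ℜ a : A) (ℑ a)]
    simp only [conjSqrt_apply, mul_add, add_mul, mul_smul_comm, smul_mul_assoc, mul_one]
  rw [hfactor]
  exact (ha.isUnit_cfcSqrt.mul hc.isUnit_one_add_I_smul).mul ha.isUnit_cfcSqrt

end

theorem isUnit_sub_smul_I_of_imPart_pos_general {A : Type*} [CStarAlgebra A] [PartialOrder A]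
    [StarOrderedRing A] (z₁ z₂ : A) (h₁ : IsUnit z₁)
    (hpos : 0 ≤ imPart (z₂ * Ring.inverse z₁)) :
    IsUnit (z₁ - Complex.I • z₂) := by
  set w := z₂ * Ring.inverse z₁
  have hre : (ℜ (1 - I • w) : A) = 1 + imPart w := by
    simp [realPart_I_smul, imPart_eq_imaginaryPart]
  have hfactor : z₁ - I • z₂ = (1 - I • w) * z₁ := by
    rw [sub_mul, one_mul, smul_mul_assoc, mul_assoc, Ring.inverse_mul_cancel z₁ h₁, mul_one]
  have hre_pos : IsStrictlyPositive (ℜ (1 - I • w) : A) :=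
    hre ▸ isStrictlyPositive_one.add_nonneg hpos
  rw [hfactor]
  exact (isUnit_of_isStrictlyPositive_realPart hre_pos).mul h₁

/-- If `z₁, z₂` are invertible and `Im(z₂ z₁⁻¹)` is positive invertible, then `z₁ - i z₂`
is invertible. -/
theorem isUnit_sub_smul_I_of_imPart_pos {A : Type*} [CStarAlgebra A] [PartialOrder A]
    [StarOrderedRing A] (z₁ z₂ : A) (h₁ : IsUnit z₁) (h₂ : IsUnit z₂)
    (hpos : 0 ≤ imPart (z₂ * Ring.inverse z₁)) (hinv : IsUnit (imPart (z₂ * Ring.inverse z₁))) :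
    IsUnit (z₁ - Complex.I • z₂) :=
  isUnit_sub_smul_I_of_imPart_pos_general z₁ z₂ h₁ hpos
end

section
/- Let A be a unital C*-algebra and let r = [[r₁₁, r₁₂],[r₁₂*, r₂₂]] be a positive invertible element of M₂(A) satisfying ρ_D r ρ_D = r⁻¹ where ρ_D = [[1,0],[0,-1]]. Then r₁₁² - r₁₂ r₁₂* = 1 and r₁₁ ≥ 1. -/
/-!
The `(1,1)` entry of `ρ_D r ρ_D r = 1` reads `r₁₁² - r₁₂ r₁₂* = 1`, so `1 ≤ r₁₁²`. Positivity of
`r` makes its diagonal entry `r₁₁` nonnegative, and operator monotonicity of the square root turns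
`1 ≤ r₁₁²` into `1 ≤ r₁₁`.
-/

theorem Matrix.diag_one_neg_one_mul_mul_diag_one_neg_one {R : Type*} [Ring R] (a b c d : R) :
    !![1, 0; 0, -1] * !![a, b; c, d] * !![1, 0; 0, -1] = !![a, -b; -c, d] := by
  ext i j
  fin_cases i <;> fin_cases j <;> simp [Matrix.mul_apply, Fin.sum_univ_two]

theorem CFC.one_le_of_one_le_mul_self {A : Type*} [CStarAlgebra A] [PartialOrder A]
    [StarOrderedRing A] {a : A} (ha : 0 ≤ a) (h : 1 ≤ a * a) : 1 ≤ a := by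
  calc (1 : A) = CFC.sqrt 1 := CFC.sqrt_one.symm
    _ ≤ CFC.sqrt (a * a) := CFC.sqrt_le_sqrt _ _ h
    _ = a := CFC.sqrt_mul_self a ha

/-- If `r = [[r₁₁,r₁₂],[r₁₂*,r₂₂]]` is positive invertible in `M₂(A)` with
`ρ_D r ρ_D = r⁻¹` (`ρ_D = [[1,0],[0,-1]]`), then `r₁₁² - r₁₂ r₁₂* = 1` and `r₁₁ ≥ 1`. -/
theorem corner_relations_of_positive_form_element {A : Type*} [CStarAlgebra A]
    [PartialOrder A] [StarOrderedRing A]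
    (ρD : Matrix (Fin 2) (Fin 2) A) (hρD : ρD = !![1, 0; 0, -1])
    (r₁₁ r₁₂ r₂₂ : A) (r : Matrix (Fin 2) (Fin 2) A)
    (hr : r = !![r₁₁, r₁₂; star r₁₂, r₂₂])
    (hpos : ∃ s : Matrix (Fin 2) (Fin 2) A, r = star s * s)
    (hru : IsUnit r)
    (hrel : ρD * r * ρD = Ring.inverse r) :
    r₁₁ * r₁₁ - r₁₂ * star r₁₂ = 1 ∧ 1 ≤ r₁₁ := by
  have hinv : ρD * r * ρD * r = 1 := hrel ▸ Ring.inverse_mul_cancel r hru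
  rw [hρD, hr, Matrix.diag_one_neg_one_mul_mul_diag_one_neg_one] at hinv
  have hcorner : r₁₁ * r₁₁ - r₁₂ * star r₁₂ = 1 := by
    simpa [Matrix.mul_apply, sub_eq_add_neg] using congrFun (congrFun hinv 0) 0
  have hr₁₁ : 0 ≤ r₁₁ := by
    obtain ⟨s, hs⟩ := hpos
    have := (Matrix.posSemidef_conjTranspose_mul_self s).diag_nonneg (i := 0)
    rwa [← Matrix.star_eq_conjTranspose, ← hs, hr] at this
  refine ⟨hcorner, CFC.one_le_of_one_le_mul_self hr₁₁ ?_⟩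
  calc (1 : A) = r₁₁ * r₁₁ - r₁₂ * star r₁₂ := hcorner.symm
    _ ≤ r₁₁ * r₁₁ := sub_le_self _ (mul_star_self_nonneg r₁₂)
end

section
/- Let A be a unital C*-algebra, ρ_D = [[1,0],[0,-1]], and let r = [[r₁₁, r₁₂],[r₁₂*, r₂₂]] be a positive element of M₂(A) with ρ_D r ρ_D = r⁻¹ and ‖r₁₂‖ < 1. If x₁ ∈ A is invertible and x₂ ∈ A with ‖x₂x₁⁻¹‖ < 1, then r₁₁x₁ + r₁₂x₂ is invertible. -/
/-!
The `(1,1)` entry of `r (ρ_D r ρ_D) = 1` reads `r₁₁² = 1 + r₁₂ r₁₂*`, so `r₁₁² ≥ 1`; since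
`r₁₁ ≥ 0` and the square root is operator monotone, `r₁₁ ≥ 1`. Hence `r₁₁` is invertible with
`‖r₁₁⁻¹‖ ≤ 1`, and `r₁₁ x₁ + r₁₂ x₂ = r₁₁ (1 + r₁₁⁻¹ r₁₂ x₂ x₁⁻¹) x₁` is invertible by a Neumann
series, the middle perturbation having norm `< 1`.
-/

theorem Matrix.star_mul_self_apply_self_nonneg {n R : Type*} [Fintype n] [NonUnitalSemiring R]
    [PartialOrder R] [StarRing R] [StarOrderedRing R] (s : Matrix n n R) (i : n) :
    0 ≤ (star s * s) i i := by
  simp only [Matrix.mul_apply, Matrix.star_apply]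
  exact Finset.sum_nonneg fun k _ ↦ star_mul_self_nonneg (s k i)

theorem Matrix.mul_self_eq_one_add_of_mul_conj_eq_one {R : Type*} [Ring R] {a b c d : R}
    (h : !![a, b; c, d] * (!![1, 0; 0, -1] * !![a, b; c, d] * !![1, 0; 0, -1]) = 1) :
    a * a = 1 + b * c := by
  have h₀₀ : a * a - b * c = 1 := by
    simpa [Matrix.mul_apply, Fin.sum_univ_two, sub_eq_add_neg] using congrFun (congrFun h 0) 0
  exact sub_eq_iff_eq_add.mp h₀₀

theorem isUnit_mul_add_mul_of_norm_lt_one {R : Type*} [NormedRing R] [HasSummableGeomSeries R]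
    {a b x y : R} (ha : IsUnit a) (hx : IsUnit x)
    (h : ‖Ring.inverse a * b * (y * Ring.inverse x)‖ < 1) :
    IsUnit (a * x + b * y) := by
  set t := Ring.inverse a * b * (y * Ring.inverse x)
  have ht : IsUnit (1 + t) := by
    simpa only [sub_neg_eq_add] using isUnit_one_sub_of_norm_lt_one (x := -t) (by rwa [norm_neg])
  have hfactor : a * (1 + t) * x = a * x + b * y := by
    simp only [t, mul_add, add_mul, mul_one, ← mul_assoc, Ring.mul_inverse_cancel a ha, one_mul]
    rw [mul_assoc _ _ x, Ring.inverse_mul_cancel x hx, mul_one]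
  exact hfactor ▸ (ha.mul ht).mul hx

namespace CStarAlgebra

variable {A : Type*} [CStarAlgebra A] [PartialOrder A] [StarOrderedRing A]

theorem one_le_of_one_le_mul_self {a : A} (ha : 0 ≤ a) (h : 1 ≤ a * a) : 1 ≤ a := by
  simpa [CFC.sqrt_one, CFC.sqrt_mul_self a ha] using CFC.sqrt_le_sqrt 1 (a * a) h

theorem norm_inverse_le_one {a : A} (ha : 1 ≤ a) : ‖Ring.inverse a‖ ≤ 1 := by
  lift a to Aˣ using isUnit_of_le 1 ha
  have hinv : 0 ≤ (↑a⁻¹ : A) := CFC.inv_nonneg_of_nonneg a (zero_le_one.trans ha)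
  rw [Ring.inverse_unit, norm_le_one_iff_of_nonneg _ hinv]
  exact inv_le_one ha

end CStarAlgebra

/-- If `r = [[r₁₁,r₁₂],[r₁₂*,r₂₂]]` is positive in `M₂(A)` with `ρ_D r ρ_D = r⁻¹` and
`‖r₁₂‖ < 1`, and `x₁` is invertible with `‖x₂ x₁⁻¹‖ < 1`, then `r₁₁ x₁ + r₁₂ x₂` is
invertible. -/
theorem isUnit_corner_combination {A : Type*} [CStarAlgebra A]
    (ρD : Matrix (Fin 2) (Fin 2) A) (hρD : ρD = !![1, 0; 0, -1])
    (r₁₁ r₁₂ r₂₂ : A) (r : Matrix (Fin 2) (Fin 2) A)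
    (hr : r = !![r₁₁, r₁₂; star r₁₂, r₂₂])
    (hpos : ∃ s : Matrix (Fin 2) (Fin 2) A, r = star s * s)
    (hru : IsUnit r)
    (hrel : ρD * r * ρD = Ring.inverse r)
    (hr₁₂ : ‖r₁₂‖ < 1)
    (x₁ x₂ : A) (hx₁ : IsUnit x₁) (hx : ‖x₂ * Ring.inverse x₁‖ < 1) :
    IsUnit (r₁₁ * x₁ + r₁₂ * x₂) := by
  let _ : PartialOrder A := CStarAlgebra.spectralOrder A
  have : StarOrderedRing A := CStarAlgebra.spectralOrderedRing A
  have hcorner : r₁₁ * r₁₁ = 1 + r₁₂ * star r₁₂ := by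
    subst hr hρD
    exact Matrix.mul_self_eq_one_add_of_mul_conj_eq_one (hrel ▸ Ring.mul_inverse_cancel _ hru)
  have hnonneg : 0 ≤ r₁₁ := by
    obtain ⟨s, hs⟩ := hpos
    have h₀₀ := Matrix.star_mul_self_apply_self_nonneg s 0
    rw [← hs, hr] at h₀₀
    simpa using h₀₀
  have hone : 1 ≤ r₁₁ := CStarAlgebra.one_le_of_one_le_mul_self hnonneg
    (hcorner ▸ le_add_of_nonneg_right (mul_star_self_nonneg r₁₂))
  refine isUnit_mul_add_mul_of_norm_lt_one (CStarAlgebra.isUnit_of_le 1 hone) hx₁ ?_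
  set z := x₂ * Ring.inverse x₁
  calc ‖Ring.inverse r₁₁ * r₁₂ * z‖ ≤ ‖Ring.inverse r₁₁‖ * ‖r₁₂‖ * ‖z‖ := norm_mul₃_le
    _ ≤ 1 * ‖r₁₂‖ * ‖z‖ := by
      gcongr; exact CStarAlgebra.norm_inverse_le_one hone
    _ < 1 := by
      rw [one_mul]; exact mul_lt_one_of_nonneg_of_lt_one_left (norm_nonneg _) hr₁₂ hx.le
end

section
/- Let A be a unital C*-algebra, g ∈ A invertible, and x ∈ A with g*x selfadjoint. For h ∈ A with Im(h) positive invertible, define the Moebius action b·h = (x + (g*)⁻¹h) g⁻¹ of the lower-triangular matrix b = [[g,0],[x,(g*)⁻¹]]. Then Im(b·h) = (g*)⁻¹ Im(h) g⁻¹; in particular Im(b·h) is positive and invertible. -/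
section ImPart

variable {A : Type*} [CStarAlgebra A]

lemma imPart_add (a b : A) : imPart (a + b) = imPart a + imPart b := by
  simp only [imPart, star_add, add_sub_add_comm, smul_add]

lemma IsSelfAdjoint.imPart_eq_zero {a : A} (ha : IsSelfAdjoint a) : imPart a = 0 := by
  rw [imPart, ha.star_eq, sub_self, smul_zero]

lemma imPart_star_mul_mul (u a : A) : imPart (star u * a * u) = star u * imPart a * u := by
  simp only [imPart, star_mul, star_star, mul_assoc, ← mul_sub, ← sub_mul, mul_smul_comm,
    smul_mul_assoc]

end ImPart

lemma borel_action_eq_conj {A : Type*} [Ring A] [StarRing A] {g : A} (hg : IsUnit g) (x h : A) :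
    (x + Ring.inverse (star g) * h) * Ring.inverse g =
      star (Ring.inverse g) * (star g * x + h) * Ring.inverse g := by
  have hinv : star (Ring.inverse g) * star g = 1 := by
    rw [← star_mul, Ring.mul_inverse_cancel g hg, star_one]
  rw [Ring.inverse_star, mul_add, ← mul_assoc, hinv, one_mul]

/-- For the Moebius action `b·h = (x + (g*)⁻¹ h) g⁻¹` of the lower triangular matrix
`b = [[g,0],[x,(g*)⁻¹]]` (with `g` invertible and `g* x` selfadjoint) on the half-space,
one has `Im(b·h) = (g*)⁻¹ Im(h) g⁻¹`; in particular `Im(b·h)` is positive invertible. -/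
theorem imPart_borel_action {A : Type*} [CStarAlgebra A] [PartialOrder A] [StarOrderedRing A]
    (g x h : A) (hg : IsUnit g) (hsa : IsSelfAdjoint (star g * x))
    (hpos : 0 ≤ imPart h) (hinv : IsUnit (imPart h)) :
    imPart ((x + Ring.inverse (star g) * h) * Ring.inverse g) =
      Ring.inverse (star g) * imPart h * Ring.inverse g ∧
    0 ≤ imPart ((x + Ring.inverse (star g) * h) * Ring.inverse g) ∧
    IsUnit (imPart ((x + Ring.inverse (star g) * h) * Ring.inverse g)) := by
  have key : imPart ((x + Ring.inverse (star g) * h) * Ring.inverse g) =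
      star (Ring.inverse g) * imPart h * Ring.inverse g := by
    rw [borel_action_eq_conj hg, imPart_star_mul_mul, imPart_add, hsa.imPart_eq_zero, zero_add]
  have hu : IsUnit (Ring.inverse g) := isUnit_ringInverse.mpr hg
  refine ⟨key.trans (by rw [Ring.inverse_star]), ?_, ?_⟩
  · rw [key]
    exact star_left_conjugate_nonneg hpos _
  · rw [key]
    exact (hu.star.mul hinv).mul hu
end

section
/- Let A be a unital C*-algebra and z ∈ A with ‖z‖ < 1. Then the map Γ⁻¹(z) = i(1-z)(1+z)⁻¹ is well-defined and Im(Γ⁻¹(z)) is positive and invertible. Conversely, if h ∈ A has Im(h) positive invertible, then 1 - ih is invertible, Γ(h) = (1+ih)(1-ih)⁻¹ satisfies ‖Γ(h)‖ < 1, and Γ and Γ⁻¹ are mutually inverse bijections between the half-space H and the open unit ball D. -/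
/-- The Cayley map `Γ(h) = (1+ih)(1-ih)⁻¹`. -/
noncomputable def cayley {A : Type*} [CStarAlgebra A] (h : A) : A :=
  (1 + Complex.I • h) * Ring.inverse (1 - Complex.I • h)

/-- The inverse Cayley map `Γ⁻¹(z) = i(1-z)(1+z)⁻¹`. -/
noncomputable def cayleyInv {A : Type*} [CStarAlgebra A] (z : A) : A :=
  Complex.I • ((1 - z) * Ring.inverse (1 + z))

lemma Ring.inverse_smul {𝕜 R : Type*} [Field 𝕜] [Ring R] [Algebra 𝕜 R] (c : 𝕜) (a : R) :
    Ring.inverse (c • a) = c⁻¹ • Ring.inverse a := by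
  rcases eq_or_ne c 0 with rfl | hc
  · simp
  have hc' : IsUnit (algebraMap 𝕜 R c) := (IsUnit.mk0 c hc).map _
  have hinv : Ring.inverse (algebraMap 𝕜 R c) = algebraMap 𝕜 R c⁻¹ := by
    simpa using (Ring.inverse_mul_eq_iff_eq_mul _ 1 _ hc').mpr
      (by rw [← map_mul, mul_inv_cancel₀ hc, map_one])
  rw [Algebra.smul_def, Ring.inverse_mul (.inl hc'), hinv, ← Algebra.commutes, Algebra.smul_def]

lemma isUnit_one_add_of_norm_lt_one {R : Type*} [NormedRing R] [HasSummableGeomSeries R] {x : R}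
    (h : ‖x‖ < 1) : IsUnit (1 + x) := by
  simpa using isUnit_one_sub_of_norm_lt_one (x := -x) (by rwa [norm_neg])

section CStarOrder

variable {A : Type*} [CStarAlgebra A] [PartialOrder A] [StarOrderedRing A]

lemma CStarAlgebra.norm_lt_one_iff_isStrictlyPositive_one_sub {a : A} (ha : 0 ≤ a) :
    ‖a‖ < 1 ↔ IsStrictlyPositive (1 - a) := by
  refine ⟨fun h ↦ (isUnit_one_sub_of_norm_lt_one h).isStrictlyPositive
    (sub_nonneg.2 ((norm_le_one_iff_of_nonneg a).1 h.le)), fun h ↦ ?_⟩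
  nontriviality A
  have hmem : 1 - ‖a‖ ∈ spectrum ℝ (1 - a) := by
    rw [← map_one (algebraMap ℝ A), ← spectrum.singleton_sub_eq]
    exact Set.sub_mem_sub rfl (norm_mem_spectrum_of_nonneg ha)
  linarith [h.spectrum_pos hmem]

lemma CStarAlgebra.norm_lt_one_iff_isStrictlyPositive_one_sub_star_mul_self (z : A) :
    ‖z‖ < 1 ↔ IsStrictlyPositive (1 - star z * z) := by
  rw [← norm_lt_one_iff_isStrictlyPositive_one_sub (star_mul_self_nonneg z),
    CStarRing.norm_star_mul_self, ← sq, sq_lt_one_iff₀ (norm_nonneg z)]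

lemma isUnit_one_add_of_nonneg_add_star {k : A} (hk : 0 ≤ k + star k) : IsUnit (1 + k) := by
  have one_le : ∀ x : A, 0 ≤ x + star x → 1 ≤ star (1 + x) * (1 + x) := fun x hx ↦ by
    rw [star_add, star_one, ← sub_nonneg]
    convert add_nonneg hx (star_mul_self_nonneg x) using 1
    noncomm_ring
  have hl : IsUnit (star (1 + k) * (1 + k)) := CStarAlgebra.isUnit_of_le 1 (one_le k hk)
  have hr : IsUnit ((1 + k) * star (1 + k)) := by
    simpa using CStarAlgebra.isUnit_of_le 1 (one_le (star k) (by rwa [star_star, add_comm]))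
  exact isUnit_iff_exists_and_exists.2
    ⟨⟨_, (mul_assoc _ _ _).symm.trans (Ring.mul_inverse_cancel _ hr)⟩,
      ⟨_, (mul_assoc _ _ _).trans (Ring.inverse_mul_cancel _ hl)⟩⟩

end CStarOrder

open Complex (I)

section Cayley

variable {A : Type*} [CStarAlgebra A]

lemma neg_I_smul_add_star (h : A) : -(I • h) + star (-(I • h)) = (2 : ℝ) • imPart h := by
  simp only [imPart, mul_inv, Complex.inv_I, star_neg, star_smul, Complex.star_def, Complex.conj_I]
  module

lemma imPart_I_smul (x : A) : imPart (I • x) = (2 : ℝ)⁻¹ • (x + star x) := by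
  simp only [imPart, mul_inv, Complex.inv_I, star_smul, Complex.star_def, Complex.conj_I]
  match_scalars <;> linear_combination (-1 / 2 : ℂ) * Complex.I_sq

lemma isUnit_two_smul_inverse {x : A} (hx : IsUnit x) : IsUnit ((2 : ℂ) • Ring.inverse x) :=
  hx.ringInverse.smul (Units.mk0 (2 : ℂ) two_ne_zero)

lemma two_smul_inverse_two_smul_inverse {x : A} (hx : IsUnit x) :
    (2 : ℂ) • Ring.inverse ((2 : ℂ) • Ring.inverse x) = x := by
  rw [Ring.inverse_smul, Ring.inverse_inverse hx, smul_smul, mul_inv_cancel₀ two_ne_zero,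
    one_smul]

lemma cayley_eq_two_smul_inverse_sub_one {h : A} (hv : IsUnit (1 - I • h)) :
    cayley h = (2 : ℂ) • Ring.inverse (1 - I • h) - 1 := by
  rw [cayley, show 1 + I • h = (2 : ℂ) • (1 : A) - (1 - I • h) by module, sub_mul,
    smul_one_mul, Ring.mul_inverse_cancel _ hv]

lemma cayleyInv_eq_I_smul_two_smul_inverse_sub_one {z : A} (hz : IsUnit (1 + z)) :
    cayleyInv z = I • ((2 : ℂ) • Ring.inverse (1 + z) - 1) := by
  rw [cayleyInv, show 1 - z = (2 : ℂ) • (1 : A) - (1 + z) by module, sub_mul, smul_one_mul,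
    Ring.mul_inverse_cancel _ hz]

lemma cayley_cayleyInv {z : A} (hz : IsUnit (1 + z)) : cayley (cayleyInv z) = z := by
  have hv : 1 - I • cayleyInv z = (2 : ℂ) • Ring.inverse (1 + z) := by
    rw [cayleyInv_eq_I_smul_two_smul_inverse_sub_one hz, smul_smul, Complex.I_mul_I]
    module
  rw [cayley_eq_two_smul_inverse_sub_one (hv ▸ isUnit_two_smul_inverse hz), hv,
    two_smul_inverse_two_smul_inverse hz, add_sub_cancel_left]

lemma cayleyInv_cayley {h : A} (hv : IsUnit (1 - I • h)) : cayleyInv (cayley h) = h := by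
  have hz : 1 + cayley h = (2 : ℂ) • Ring.inverse (1 - I • h) := by
    rw [cayley_eq_two_smul_inverse_sub_one hv, add_sub_cancel]
  rw [cayleyInv_eq_I_smul_two_smul_inverse_sub_one (hz ▸ isUnit_two_smul_inverse hv), hz,
    two_smul_inverse_two_smul_inverse hv, sub_sub_cancel_left, smul_neg, smul_smul,
    Complex.I_mul_I, neg_one_smul, neg_neg]

lemma imPart_cayleyInv {z : A} (hz : IsUnit (1 + z)) :
    imPart (cayleyInv z) =
      star (Ring.inverse (1 + z)) * (1 - star z * z) * Ring.inverse (1 + z) := by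
  set q := Ring.inverse (1 + z)
  have hzq : (1 + z) * q = 1 := Ring.mul_inverse_cancel _ hz
  have hqz : star q * (1 + star z) = 1 := by
    rw [show 1 + star z = star (1 + z) by simp, ← star_mul, hzq, star_one]
  rw [cayleyInv_eq_I_smul_two_smul_inverse_sub_one hz, imPart_I_smul]
  calc (2 : ℝ)⁻¹ • ((2 : ℂ) • q - 1 + star ((2 : ℂ) • q - 1))
        = q + star q - 1 := by
        simp only [star_sub, star_smul, star_one, star_ofNat]
        module
    _ = star q * (1 + star z) * q + star q * ((1 + z) * q)
          - star q * (1 + star z) * ((1 + z) * q) := by rw [hzq, hqz]; noncomm_ring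
    _ = star q * (1 - star z * z) * q := by noncomm_ring

lemma one_sub_star_cayley_mul_cayley {h : A} (hv : IsUnit (1 - I • h)) :
    1 - star (cayley h) * cayley h =
      star (Ring.inverse (1 - I • h)) * ((4 : ℝ) • imPart h) *
        Ring.inverse (1 - I • h) := by
  set k := -(I • h)
  set q := Ring.inverse (1 - I • h)
  have hkq : (1 + k) * q = 1 := by rw [← sub_eq_add_neg]; exact Ring.mul_inverse_cancel _ hv
  have hqk : star q * star (1 + k) = 1 := by rw [← star_mul, hkq, star_one]
  rw [cayley_eq_two_smul_inverse_sub_one hv, show (4 : ℝ) = 2 * 2 by norm_num, mul_smul,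
    ← neg_I_smul_add_star]
  calc 1 - star ((2 : ℂ) • q - 1) * ((2 : ℂ) • q - 1)
        = (2 : ℝ) • (star q + q - (2 : ℝ) • (star q * q)) := by
        simp only [star_sub, star_smul, star_one, star_ofNat, sub_mul, mul_sub, smul_mul_assoc,
          mul_smul_comm, one_mul, mul_one]
        module
    _ = (2 : ℝ) • (star q * ((1 + k) * q) + star q * star (1 + k) * q
          - (2 : ℝ) • (star q * q)) := by
        rw [hkq, hqk]; noncomm_ring
    _ = star q * ((2 : ℝ) • (k + star k)) * q := by
        simp only [star_add, star_one, mul_add, add_mul, mul_smul_comm, smul_mul_assoc, mul_one,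
          one_mul, mul_assoc]
        module

variable [PartialOrder A] [StarOrderedRing A]

lemma isUnit_one_sub_I_smul {h : A} (hh : 0 ≤ imPart h) : IsUnit (1 - I • h) := by
  rw [sub_eq_add_neg]
  exact isUnit_one_add_of_nonneg_add_star (neg_I_smul_add_star h ▸ smul_nonneg zero_le_two hh)

lemma isStrictlyPositive_imPart_cayleyInv {z : A} (hz : ‖z‖ < 1) :
    IsStrictlyPositive (imPart (cayleyInv z)) := by
  have hu := isUnit_one_add_of_norm_lt_one hz
  rw [imPart_cayleyInv hu, hu.ringInverse.isStrictlyPositive_star_left_conjugate_iff]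
  exact (CStarAlgebra.norm_lt_one_iff_isStrictlyPositive_one_sub_star_mul_self z).1 hz

lemma norm_cayley_lt_one {h : A} (hh : IsStrictlyPositive (imPart h)) : ‖cayley h‖ < 1 := by
  have hv := isUnit_one_sub_I_smul hh.nonneg
  rw [CStarAlgebra.norm_lt_one_iff_isStrictlyPositive_one_sub_star_mul_self,
    one_sub_star_cayley_mul_cayley hv, hv.ringInverse.isStrictlyPositive_star_left_conjugate_iff]
  exact hh.smul (by norm_num)

end Cayley

/-- `Γ(h) = (1+ih)(1-ih)⁻¹` and `Γ⁻¹(z) = i(1-z)(1+z)⁻¹` are mutually inverse bijections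
between the Poincaré half-space `H = { h : Im(h) positive invertible }` and the open unit
ball `D = { z : ‖z‖ < 1 }`. -/
theorem cayley_bijection_halfspace_ball {A : Type*} [CStarAlgebra A] [PartialOrder A]
    [StarOrderedRing A] :
    (∀ z : A, ‖z‖ < 1 →
      IsUnit (1 + z) ∧ 0 ≤ imPart (cayleyInv z) ∧ IsUnit (imPart (cayleyInv z))) ∧
    (∀ h : A, 0 ≤ imPart h → IsUnit (imPart h) →
      IsUnit (1 - Complex.I • h) ∧ ‖cayley h‖ < 1) ∧
    (∀ z : A, ‖z‖ < 1 → cayley (cayleyInv z) = z) ∧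
    (∀ h : A, 0 ≤ imPart h → IsUnit (imPart h) → cayleyInv (cayley h) = h) := by
  refine ⟨fun z hz ↦ ?_, fun h h0 hu ↦ ?_,
    fun z hz ↦ cayley_cayleyInv (isUnit_one_add_of_norm_lt_one hz),
    fun h h0 _ ↦ cayleyInv_cayley (isUnit_one_sub_I_smul h0)⟩
  · have hpos := isStrictlyPositive_imPart_cayleyInv hz
    exact ⟨isUnit_one_add_of_norm_lt_one hz, hpos.nonneg, hpos.isUnit⟩
  · exact ⟨isUnit_one_sub_I_smul h0, norm_cayley_lt_one (hu.isStrictlyPositive h0)⟩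
end

section
/- Let A be a unital C*-algebra and x₁, x₂ ∈ A with x₁ invertible and x₁*x₁ - x₂*x₂ = 1. Let ρ_D = [[1,0],[0,-1]] and p = [[x₁x₁*, -x₁x₂*],[x₂x₁*, -x₂x₂*]] ∈ M₂(A). Then p² = p, and the element (2p - 1)ρ_D is positive and invertible in M₂(A). -/
/-!
Writing `v = (x₁, x₂)ᵗ`, `p` is the rank-one matrix `v (x₁*, -x₂*)`, and `(x₁*, -x₂*) v =
x₁* x₁ - x₂* x₂ = 1` makes it idempotent. Then `(2p - 1) ρ_D = 2 v v* - ρ_D = v v* + u u*` with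
`u = (x₁ x₂* b*⁻¹, b)` and `b = √(1 + x₂ x₂*)`: the identity `u u* = v v* - ρ_D` reduces, through
the push-through identity `x₂* (1 + x₂ x₂*)⁻¹ = (1 + x₂* x₂)⁻¹ x₂* = (x₁* x₁)⁻¹ x₂*`, to
`x₁ (x₁* x₁)⁻¹ x₁* = 1`, which is where the invertibility of `x₁` enters. Finally `(2p - 1)² = 1`
and `ρ_D² = 1`, so `(2p - 1) ρ_D` is invertible.
-/

section

variable {R : Type*}

theorem isIdempotentElem_vecMulVec [Semiring R] {m : Type*} [Fintype m] {v w : m → R}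
    (h : w ⬝ᵥ v = 1) : IsIdempotentElem (Matrix.vecMulVec v w) := by
  rw [IsIdempotentElem, Matrix.vecMulVec_mul_vecMulVec, h, one_smul]

theorem IsIdempotentElem.two_mul_sub_one_mul_self [Ring R] {p : R} (hp : IsIdempotentElem p) :
    (2 * p - 1) * (2 * p - 1) = 1 := by
  calc (2 * p - 1) * (2 * p - 1) = 4 * (p * p) - 4 * p + 1 := by noncomm_ring
    _ = 1 := by rw [hp.eq]; abel

theorem isUnit_of_mul_self_eq_one [Monoid R] {a : R} (h : a * a = 1) : IsUnit a :=
  isUnit_mul_self_iff.mp (h ▸ isUnit_one)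

theorem mul_eq_mul_of_mul_one_add_mul_eq_one [Ring R] {y z c d : R}
    (hd : d * (1 + y * z) = 1) (hc : (1 + z * y) * c = 1) : y * c = d * y := by
  calc y * c = d * (1 + y * z) * y * c := by rw [hd, one_mul]
    _ = d * y * ((1 + z * y) * c) := by noncomm_ring
    _ = d * y := by rw [hc, mul_one]

theorem mul_star_self_eq_mul_star_sub_one [Ring R] [StarRing R] (x₁ b : Rˣ) {x₂ : R}
    (hsp : star (x₁ : R) * x₁ - star x₂ * x₂ = 1)
    (hb : (b : R) * star (b : R) = 1 + x₂ * star x₂) :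
    x₁ * star x₂ * ↑(star b)⁻¹ * star (x₁ * star x₂ * ↑(star b)⁻¹ : R) = x₁ * star x₁ - 1 := by
  have hx₂ : star x₂ * x₂ = ↑(star x₁ * x₁) - 1 := by rw [← hsp]; simp
  have hd : ↑(star x₁ * x₁)⁻¹ * (1 + star x₂ * x₂) = 1 := by
    rw [hx₂, add_sub_cancel, Units.inv_mul]
  have hc : (1 + x₂ * star x₂) * ↑(b * star b)⁻¹ = 1 := by
    simpa [hb] using Units.mul_inv (b * star b)
  calc x₁ * star x₂ * ↑(star b)⁻¹ * star (x₁ * star x₂ * ↑(star b)⁻¹ : R)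
      = x₁ * (star x₂ * ↑(b * star b)⁻¹) * x₂ * star (x₁ : R) := by
        simp [mul_assoc]
    _ = x₁ * ↑(star x₁ * x₁)⁻¹ * (↑(star x₁ * x₁) - 1) * star (x₁ : R) := by
        rw [mul_eq_mul_of_mul_one_add_mul_eq_one hd hc, ← hx₂]; noncomm_ring
    _ = x₁ * (↑(star x₁ * x₁)⁻¹ * ↑(star x₁ * x₁)) * star (x₁ : R)
          - x₁ * ↑(star x₁ * x₁)⁻¹ * ↑(star x₁) := by
        simp only [Units.coe_star]; noncomm_ring
    _ = x₁ * star x₁ - 1 := by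
        rw [Units.inv_mul, mul_one, ← Units.val_mul, ← Units.val_mul, mul_inv_rev, mul_assoc,
          inv_mul_cancel_right, mul_inv_cancel, Units.val_one, Units.coe_star]

theorem CStarAlgebra.exists_unit_mul_star_eq_one_add_mul_star {A : Type*} [CStarAlgebra A]
    (x : A) : ∃ b : Aˣ, (b : A) * star (b : A) = 1 + x * star x := by
  let := CStarAlgebra.spectralOrder A
  have := CStarAlgebra.spectralOrderedRing A
  have hle : 1 ≤ 1 + x * star x := le_add_of_nonneg_right (mul_star_self_nonneg x)
  have hpos : 0 ≤ 1 + x * star x := zero_le_one.trans hle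
  obtain ⟨b, hb⟩ := (CFC.isUnit_sqrt_iff _ hpos).mpr (CStarAlgebra.isUnit_of_le 1 hle)
  have hsqrt : 0 ≤ CFC.sqrt (1 + x * star x) := CFC.sqrt_nonneg _
  refine ⟨b, ?_⟩
  rw [hb, (IsSelfAdjoint.of_nonneg hsqrt).star_eq, CFC.sqrt_mul_sqrt_self _ hpos]

theorem two_mul_sub_one_mul_eq_star_mul_self [Ring R] [StarRing R] {x₁ x₂ a b : R}
    (haa : a * star a = x₁ * star x₁ - 1) (hab : a * star b = x₁ * star x₂)
    (hbb : b * star b = 1 + x₂ * star x₂) :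
    (2 * !![x₁ * star x₁, -(x₁ * star x₂); x₂ * star x₁, -(x₂ * star x₂)] - 1) *
        !![1, 0; 0, -1] =
      star !![star x₁, star x₂; star a, star b] * !![star x₁, star x₂; star a, star b] := by
  have hba : b * star a = x₂ * star x₁ := by
    rw [← star_star b, ← star_mul, hab, star_mul, star_star]
  ext i j
  fin_cases i <;> fin_cases j <;>
    simp [Matrix.mul_apply, Fin.sum_univ_two, Matrix.star_apply, haa, hab, hba, hbb, two_mul] <;>
    abel

end

/-- For `(x₁,x₂)` in the sphere of `θ_D` (`x₁* x₁ - x₂* x₂ = 1`, `x₁` invertible), the matrix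
`p = [[x₁x₁*, -x₁x₂*],[x₂x₁*, -x₂x₂*]]` is idempotent and `(2p-1)ρ_D` is positive invertible
in `M₂(A)`. -/
theorem projection_and_positive_of_sphere {A : Type*} [CStarAlgebra A]
    (x₁ x₂ : A) (hx₁ : IsUnit x₁) (hsp : star x₁ * x₁ - star x₂ * x₂ = 1)
    (ρD p : Matrix (Fin 2) (Fin 2) A) (hρD : ρD = !![1, 0; 0, -1])
    (hp : p = !![x₁ * star x₁, -(x₁ * star x₂); x₂ * star x₁, -(x₂ * star x₂)]) :
    p * p = p ∧
    (∃ s : Matrix (Fin 2) (Fin 2) A, (2 * p - 1) * ρD = star s * s) ∧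
    IsUnit ((2 * p - 1) * ρD) := by
  have hp_idem : IsIdempotentElem p := by
    have hp_vec : p = Matrix.vecMulVec ![x₁, x₂] ![star x₁, -star x₂] := by
      rw [hp]; ext i j; fin_cases i <;> fin_cases j <;> simp [Matrix.vecMulVec_apply]
    rw [hp_vec]
    exact isIdempotentElem_vecMulVec (by simpa [dotProduct, sub_eq_add_neg] using hsp)
  refine ⟨hp_idem, ?_, ?_⟩
  · obtain ⟨u, rfl⟩ := hx₁
    obtain ⟨b, hb⟩ := CStarAlgebra.exists_unit_mul_star_eq_one_add_mul_star x₂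
    have hab : (u * star x₂ * ↑(star b)⁻¹ : A) * star (b : A) = u * star x₂ := by
      rw [mul_assoc _ _ (star (b : A)), ← Units.coe_star, Units.inv_mul, mul_one]
    rw [hp, hρD]
    exact ⟨_, two_mul_sub_one_mul_eq_star_mul_self
      (mul_star_self_eq_mul_star_sub_one u b hsp hb) hab hb⟩
  · have hρD_sq : ρD * ρD = 1 := by
      rw [hρD, Matrix.mul_fin_two, Matrix.one_fin_two]; simp
    exact (isUnit_of_mul_self_eq_one hp_idem.two_mul_sub_one_mul_self).mul
      (isUnit_of_mul_self_eq_one hρD_sq)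
end

section
/- Let A be a unital C*-algebra and γ ∈ A. Then the selfadjoint matrix [[(1+γγ*)^{1/2}, γ],[γ*, (1+γ*γ)^{1/2}]] ∈ M₂(A) is positive. (Proof: it equals (1+m²)^{1/2} + m for the selfadjoint m = [[0,γ],[γ*,0]], and (1+t²)^{1/2} + t ≥ 0 for all real t.) -/
/-!
With `m = !![0, γ; star γ, 0]`, which is selfadjoint in the C⋆-algebra of `2 × 2` matrices over
`A`, the given matrix is `p + m` where `p = diag(√(1 + γγ*), √(1 + γ*γ))` is positive with
`p² = 1 + m²`. Hence `p = √(1 + m²)`, and `p + m = f(m)` for `f t = √(1 + t²) + t ≥ |t| + t ≥ 0`.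
-/

open CStarMatrix Matrix

section

variable {B : Type*} [CStarAlgebra B] [PartialOrder B] [StarOrderedRing B] {m : B}

theorem IsSelfAdjoint.cfcSqrt_one_add_mul_self_add_nonneg (hm : IsSelfAdjoint m) :
    0 ≤ CFC.sqrt (1 + m * m) + m := by
  have hsqrt : CFC.sqrt (1 + m * m) = cfc (fun t : ℝ => √(1 + t * t)) m := by
    refine CFC.sqrt_unique ?_ (cfc_nonneg fun t _ => Real.sqrt_nonneg _)
    rw [← cfc_mul .., cfc_congr fun t _ => Real.mul_self_sqrt (add_nonneg zero_le_one
      (mul_self_nonneg t)), cfc_const_add .., cfc_mul .., cfc_id' ℝ m,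
      Algebra.algebraMap_eq_smul_one, one_smul]
  conv_rhs => rw [hsqrt]; rhs; rw [← cfc_id' ℝ m]
  rw [← cfc_add ..]
  refine cfc_nonneg fun t _ => ?_
  calc 0 ≤ |t| + t := neg_le_iff_add_nonneg'.mp (neg_abs_le t)
    _ ≤ √(1 + t * t) + t := by
      rw [← Real.sqrt_mul_self_eq_abs]
      gcongr
      exact le_add_of_nonneg_left zero_le_one

/- Stated without `CFC.sqrt` on purpose: for `B = CStarMatrix n n A` the real functional calculus
is not found by instance search (its two `ℝ`-algebra structures agree only up to unfolding), but
it is available here, inside the proof for an abstract `B`. -/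
theorem IsSelfAdjoint.exists_add_eq_star_mul_self (hm : IsSelfAdjoint m) {p : B} (hp : 0 ≤ p)
    (hpm : p * p = 1 + m * m) : ∃ s, p + m = star s * s := by
  rw [← CFC.sqrt_unique hpm hp]
  exact CStarAlgebra.nonneg_iff_eq_star_mul_self.mp hm.cfcSqrt_one_add_mul_self_add_nonneg

end

theorem CStarMatrix.diagonal_nonneg {A : Type*} [CStarAlgebra A] [PartialOrder A]
    [StarOrderedRing A] {n : Type*} [Fintype n] [DecidableEq n] {d : n → A}
    (hd : ∀ i, 0 ≤ d i) : 0 ≤ (ofMatrix (diagonal d) : CStarMatrix n n A) := by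
  choose x hx using fun i => CStarAlgebra.nonneg_iff_eq_star_mul_self.mp (hd i)
  have hdx : (ofMatrix (diagonal d) : CStarMatrix n n A) =
      star (ofMatrix (diagonal x)) * ofMatrix (diagonal x) := by
    show diagonal d = (diagonal x)ᴴ * diagonal x
    rw [diagonal_conjTranspose, diagonal_mul_diagonal]
    exact congrArg diagonal (funext hx)
  rw [hdx]
  exact star_mul_self_nonneg _

/-- For any `γ ∈ A`, the selfadjoint matrix
`[[(1+γγ*)^{1/2}, γ],[γ*, (1+γ*γ)^{1/2}]] ∈ M₂(A)` is positive. -/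
theorem matrix_sqrt_corner_positive {A : Type*} [CStarAlgebra A] [PartialOrder A]
    [StarOrderedRing A] (γ : A) :
    ∃ s : Matrix (Fin 2) (Fin 2) A,
      !![CFC.sqrt (1 + γ * star γ), γ; star γ, CFC.sqrt (1 + star γ * γ)] = star s * s := by
  set x := CFC.sqrt (1 + γ * star γ)
  set y := CFC.sqrt (1 + star γ * γ)
  have hx : x * x = 1 + γ * star γ :=
    CFC.sqrt_mul_sqrt_self _ (add_nonneg zero_le_one (mul_star_self_nonneg γ))
  have hy : y * y = 1 + star γ * γ :=
    CFC.sqrt_mul_sqrt_self _ (add_nonneg zero_le_one (star_mul_self_nonneg γ))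
  let m : CStarMatrix (Fin 2) (Fin 2) A := ofMatrix !![0, γ; star γ, 0]
  let p : CStarMatrix (Fin 2) (Fin 2) A := ofMatrix (diagonal ![x, y])
  have hm : IsSelfAdjoint m := by
    show (!![0, γ; star γ, 0])ᴴ = !![0, γ; star γ, 0]
    ext i j
    fin_cases i <;> fin_cases j <;> simp
  have hp : 0 ≤ p := diagonal_nonneg fun i => by fin_cases i <;> exact CFC.sqrt_nonneg _
  have hpm : p * p = 1 + m * m := by
    show diagonal ![x, y] * diagonal ![x, y] = 1 + !![0, γ; star γ, 0] * !![0, γ; star γ, 0]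
    rw [diagonal_vec2, mul_fin_two, mul_fin_two, one_fin_two]
    simp [hx, hy]
  obtain ⟨s, hs⟩ := hm.exists_add_eq_star_mul_self hp hpm
  refine ⟨ofMatrix.symm s, Eq.trans ?_ hs⟩
  show _ = diagonal ![x, y] + !![0, γ; star γ, 0]
  rw [diagonal_vec2]
  simp
end

section
/- Let A be a unital C*-algebra and z ∈ A with ‖z‖ < 1. Let Ω = [[0, z*],[z, 0]] ∈ M₂(A). Then ‖Ω‖ = ‖z‖ < 1, (1-Ω²)⁻¹(1+Ω)² is positive invertible, and ‖log((1-Ω²)⁻¹(1+Ω)²)‖ = ‖log(1+Ω) - log(1-Ω)‖ = log((1+‖z‖)/(1-‖z‖)). -/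
/-!
`Ω` is self-adjoint with `Ω * Ω = diag(z⋆z, zz⋆)`, so `‖Ω‖²` is the spectral radius of this
diagonal matrix, i.e. `‖z‖²`. Everything else is continuous functional calculus for the
self-adjoint element `Ω`, whose spectrum lies in `[-‖z‖, ‖z‖] ⊆ (-1, 1)`:
`(1 - Ω²)⁻¹(1 + Ω)² = g(Ω)` with `g x = (1 + x) / (1 - x) > 0`, and
`log g(Ω) = log(1 + Ω) - log(1 - Ω) = h(Ω)` with `h x = log (1 + x) - log (1 - x)`. Since `h` is odd
and increasing and one of `±‖Ω‖` lies in the spectrum, `‖h(Ω)‖ = h ‖Ω‖`.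
-/

open scoped ENNReal

namespace Matrix

variable {n R A : Type*} [Fintype n] [DecidableEq n]

theorem isUnit_diagonal' [Ring A] {d : n → A} : IsUnit (diagonal d) ↔ IsUnit d := by
  refine ⟨fun h => ?_, fun h => h.map (diagonalRingHom n A)⟩
  obtain ⟨M, hdM, hMd⟩ := isUnit_iff_exists.mp h
  refine isUnit_iff_exists.mpr ⟨fun i => M i i, funext fun i => ?_, funext fun i => ?_⟩
  · simpa [diagonal_mul] using congr_fun (congr_fun hdM i) i
  · simpa [mul_diagonal] using congr_fun (congr_fun hMd i) i

theorem spectrum_diagonal_eq_iUnion [CommSemiring R] [Ring A] [Algebra R A] (d : n → A) :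
    spectrum R (diagonal d) = ⋃ i, spectrum R (d i) := by
  rw [← Pi.spectrum_eq]
  ext r
  rw [spectrum.mem_iff, spectrum.mem_iff, algebraMap_eq_diagonal, diagonal_sub, isUnit_diagonal']
  rfl

theorem spectralRadius_diagonal {𝕜 : Type*} [NormedField 𝕜] [Ring A] [Algebra 𝕜 A] (d : n → A) :
    spectralRadius 𝕜 (diagonal d) = ⨆ i, spectralRadius 𝕜 (d i) := by
  simp only [spectralRadius, spectrum_diagonal_eq_iUnion, iSup_iUnion]

theorem isSelfAdjoint_antidiag_star [AddMonoid A] [StarAddMonoid A] (z : A) :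
    IsSelfAdjoint !![0, star z; z, 0] := by
  ext i j
  fin_cases i <;> fin_cases j <;> simp [star_apply]

end Matrix

theorem norm_map_antidiag_star {A B : Type*} [CStarAlgebra A] [CStarAlgebra B]
    (φ : Matrix (Fin 2) (Fin 2) A ≃⋆ₐ[ℂ] B) (z : A) :
    ‖φ !![0, star z; z, 0]‖ = ‖z‖ := by
  set Ω : Matrix (Fin 2) (Fin 2) A := !![0, star z; z, 0]
  have hΩΩ : Ω * Ω = Matrix.diagonal ![star z * z, z * star z] := by
    simp [Ω, Matrix.diagonal_fin_two]
  have hdiag : ∀ i, spectralRadius ℂ (![star z * z, z * star z] i) = ‖z‖₊ ^ 2 := by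
    intro i
    fin_cases i
    · simp [(IsSelfAdjoint.star_mul_self z).spectralRadius_eq_nnnorm,
        CStarRing.nnnorm_star_mul_self, sq]
    · simp [(IsSelfAdjoint.mul_star_self z).spectralRadius_eq_nnnorm,
        CStarRing.nnnorm_self_mul_star, sq]
  have hsq : (‖φ Ω‖₊ : ℝ≥0∞) ^ 2 = ‖z‖₊ ^ 2 := calc
    (‖φ Ω‖₊ : ℝ≥0∞) ^ 2 = ‖star (φ Ω) * φ Ω‖₊ := by
      rw [CStarRing.nnnorm_star_mul_self, sq, ENNReal.coe_mul]
    _ = spectralRadius ℂ (star (φ Ω) * φ Ω) :=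
      (IsSelfAdjoint.star_mul_self _).spectralRadius_eq_nnnorm.symm
    _ = spectralRadius ℂ (Ω * Ω) := by
      rw [((Matrix.isSelfAdjoint_antidiag_star z).map φ).star_eq, ← map_mul, spectralRadius,
        spectralRadius, AlgEquiv.spectrum_eq]
    _ = ‖z‖₊ ^ 2 := by
      rw [hΩΩ, Matrix.spectralRadius_diagonal, funext hdiag, iSup_const]
  exact congrArg NNReal.toReal <|
    ENNReal.coe_injective <| (ENNReal.pow_right_strictMono two_ne_zero).injective hsq

theorem abs_le_of_odd_of_monotoneOn {f : ℝ → ℝ} {r x : ℝ} (hodd : ∀ x, f (-x) = -f x)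
    (hmono : MonotoneOn f (Set.Icc (-r) r)) (hx : |x| ≤ r) : |f x| ≤ f r := by
  have hr : 0 ≤ r := (abs_nonneg x).trans hx
  have hxr := abs_le.mp hx
  have hr_mem : r ∈ Set.Icc (-r) r := ⟨by linarith, le_rfl⟩
  have hnegr_mem : -r ∈ Set.Icc (-r) r := ⟨le_rfl, by linarith⟩
  refine abs_le.mpr ⟨?_, hmono hxr hr_mem hxr.2⟩
  rw [← hodd]
  exact hmono hnegr_mem hxr hxr.1

theorem monotoneOn_log_one_add_sub_log_one_sub :
    MonotoneOn (fun x => Real.log (1 + x) - Real.log (1 - x)) (Set.Ioo (-1) 1) := by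
  intro x hx y hy hxy
  have h₁ := Real.log_le_log (by linarith [hx.1]) (by linarith : 1 + x ≤ 1 + y)
  have h₂ := Real.log_le_log (by linarith [hy.2]) (by linarith : 1 - y ≤ 1 - x)
  dsimp only
  linarith

namespace spectrum

variable {A : Type*} [CStarAlgebra A] {a : A} {x : ℝ}

theorem abs_le_norm_of_mem (hx : x ∈ spectrum ℝ a) : |x| ≤ ‖a‖ := by
  rcases subsingleton_or_nontrivial A with hA | hA
  · simp [spectrum.of_subsingleton] at hx
  · exact norm_le_norm_of_mem hx

theorem one_add_pos_of_mem (h : ‖a‖ < 1) (hx : x ∈ spectrum ℝ a) : 0 < 1 + x := by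
  linarith [(abs_le.mp (abs_le_norm_of_mem hx)).1]

theorem one_sub_pos_of_mem (h : ‖a‖ < 1) (hx : x ∈ spectrum ℝ a) : 0 < 1 - x := by
  linarith [(abs_le.mp (abs_le_norm_of_mem hx)).2]

theorem one_add_div_one_sub_pos_of_mem (h : ‖a‖ < 1) (hx : x ∈ spectrum ℝ a) :
    0 < (1 + x) / (1 - x) :=
  div_pos (one_add_pos_of_mem h hx) (one_sub_pos_of_mem h hx)

theorem continuousOn_one_add_div_one_sub (h : ‖a‖ < 1) :
    ContinuousOn (fun x : ℝ => (1 + x) / (1 - x)) (spectrum ℝ a) :=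
  .div (by fun_prop) (by fun_prop) fun _ hx => (one_sub_pos_of_mem h hx).ne'

end spectrum

namespace IsSelfAdjoint

variable {A : Type*} [CStarAlgebra A] {a : A}

theorem norm_cfc_of_odd_of_monotoneOn (ha : IsSelfAdjoint a) {f : ℝ → ℝ}
    (hodd : ∀ x, f (-x) = -f x) (hmono : MonotoneOn f (Set.Icc (-‖a‖) ‖a‖))
    (hf : ContinuousOn f (spectrum ℝ a)) : ‖cfc f a‖ = f ‖a‖ := by
  have hbound : ∀ x ∈ spectrum ℝ a, |f x| ≤ f ‖a‖ := fun x hx =>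
    abs_le_of_odd_of_monotoneOn hodd hmono (spectrum.abs_le_norm_of_mem hx)
  have hnorm : |f ‖a‖| = f ‖a‖ :=
    abs_of_nonneg <| (abs_nonneg _).trans <| abs_le_of_odd_of_monotoneOn hodd hmono (abs_norm a).le
  refine le_antisymm (norm_cfc_le (hnorm ▸ abs_nonneg _) hbound) ?_
  rcases subsingleton_or_nontrivial A with hA | hA
  · have hf0 : f 0 = 0 := by linarith [neg_zero (G := ℝ) ▸ hodd 0]
    rw [Subsingleton.elim a 0, norm_zero, hf0]
    exact norm_nonneg _
  · rcases CStarAlgebra.norm_or_neg_norm_mem_spectrum ha with hmem | hmem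
    · exact hnorm ▸ norm_apply_le_norm_cfc f a hmem
    · rw [← hnorm, ← abs_neg, ← hodd]
      exact norm_apply_le_norm_cfc f a hmem

theorem cfc_one_add (ha : IsSelfAdjoint a) : cfc (fun x : ℝ => 1 + x) a = 1 + a := by
  rw [cfc_const_add _ _ a, cfc_id' ℝ a, map_one]

theorem cfc_one_sub (ha : IsSelfAdjoint a) : cfc (fun x : ℝ => 1 - x) a = 1 - a := by
  rw [cfc_sub _ _ a, cfc_const_one ℝ a, cfc_id' ℝ a]

theorem cfc_log_cfc (ha : IsSelfAdjoint a) {g : ℝ → ℝ} (hg : ContinuousOn g (spectrum ℝ a))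
    (hpos : ∀ x ∈ spectrum ℝ a, 0 < g x) :
    cfc Real.log (cfc g a) = cfc (fun x => Real.log (g x)) a := by
  refine (cfc_comp' _ _ a (Real.continuousOn_log.mono ?_) hg).symm
  rintro _ ⟨x, hx, rfl⟩
  exact (hpos x hx).ne'

theorem cfc_log_one_add (ha : IsSelfAdjoint a) (h : ‖a‖ < 1) :
    cfc Real.log (1 + a) = cfc (fun x => Real.log (1 + x)) a := by
  rw [← ha.cfc_one_add, ha.cfc_log_cfc (by fun_prop) fun _ => spectrum.one_add_pos_of_mem h]

theorem cfc_log_one_sub (ha : IsSelfAdjoint a) (h : ‖a‖ < 1) :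
    cfc Real.log (1 - a) = cfc (fun x => Real.log (1 - x)) a := by
  rw [← ha.cfc_one_sub, ha.cfc_log_cfc (by fun_prop) fun _ => spectrum.one_sub_pos_of_mem h]

theorem inverse_one_sub_mul_self_mul_eq_cfc (ha : IsSelfAdjoint a) (h : ‖a‖ < 1) :
    Ring.inverse (1 - a * a) * ((1 + a) * (1 + a)) = cfc (fun x : ℝ => (1 + x) / (1 - x)) a := by
  have hsq : 1 - a * a = cfc (fun x : ℝ => (1 - x) * (1 + x)) a := by
    rw [cfc_mul _ _ a, ha.cfc_one_sub, ha.cfc_one_add]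
    noncomm_ring
  have hne : ∀ x ∈ spectrum ℝ a, (1 - x) * (1 + x) ≠ 0 := fun x hx =>
    (mul_pos (spectrum.one_sub_pos_of_mem h hx) (spectrum.one_add_pos_of_mem h hx)).ne'
  calc Ring.inverse (1 - a * a) * ((1 + a) * (1 + a))
      = cfc (fun x : ℝ => ((1 - x) * (1 + x))⁻¹) a * cfc (fun x : ℝ => (1 + x) * (1 + x)) a := by
        rw [hsq, cfc_inv _ a hne, cfc_mul (fun x : ℝ => 1 + x) (fun x : ℝ => 1 + x) a,
          ha.cfc_one_add]
    _ = cfc (fun x : ℝ => ((1 - x) * (1 + x))⁻¹ * ((1 + x) * (1 + x))) a :=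
        (cfc_mul _ _ a (continuousOn_inv₀.comp (by fun_prop) hne)).symm
    _ = cfc (fun x : ℝ => (1 + x) / (1 - x)) a := cfc_congr fun x hx => by
        field_simp [(spectrum.one_sub_pos_of_mem h hx).ne', (spectrum.one_add_pos_of_mem h hx).ne']

theorem cfc_log_one_add_div_one_sub (ha : IsSelfAdjoint a) (h : ‖a‖ < 1) :
    cfc Real.log (cfc (fun x : ℝ => (1 + x) / (1 - x)) a) =
      cfc Real.log (1 + a) - cfc Real.log (1 - a) := by
  have hadd : ∀ x ∈ spectrum ℝ a, 1 + x ≠ 0 := fun x hx => (spectrum.one_add_pos_of_mem h hx).ne'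
  have hsub : ∀ x ∈ spectrum ℝ a, 1 - x ≠ 0 := fun x hx => (spectrum.one_sub_pos_of_mem h hx).ne'
  rw [ha.cfc_log_cfc (spectrum.continuousOn_one_add_div_one_sub h)
      fun _ => spectrum.one_add_div_one_sub_pos_of_mem h, ha.cfc_log_one_add h,
    ha.cfc_log_one_sub h, ← cfc_sub _ _ a]
  exact cfc_congr fun x hx => Real.log_div (hadd x hx) (hsub x hx)

theorem norm_cfc_log_one_add_sub_cfc_log_one_sub (ha : IsSelfAdjoint a) (h : ‖a‖ < 1) :
    ‖cfc Real.log (1 + a) - cfc Real.log (1 - a)‖ = Real.log ((1 + ‖a‖) / (1 - ‖a‖)) := by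
  have hadd : ∀ x ∈ spectrum ℝ a, 1 + x ≠ 0 := fun x hx => (spectrum.one_add_pos_of_mem h hx).ne'
  have hsub : ∀ x ∈ spectrum ℝ a, 1 - x ≠ 0 := fun x hx => (spectrum.one_sub_pos_of_mem h hx).ne'
  have hodd (x : ℝ) :
      Real.log (1 + -x) - Real.log (1 - -x) = -(Real.log (1 + x) - Real.log (1 - x)) := by
    rw [← sub_eq_add_neg, sub_neg_eq_add]
    ring
  have hmono := monotoneOn_log_one_add_sub_log_one_sub.mono fun x (hx : x ∈ Set.Icc (-‖a‖) ‖a‖) =>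
    (⟨by linarith [hx.1], by linarith [hx.2]⟩ : x ∈ Set.Ioo (-1) 1)
  rw [ha.cfc_log_one_add h, ha.cfc_log_one_sub h, ← cfc_sub _ _ a,
    ha.norm_cfc_of_odd_of_monotoneOn hodd hmono (by fun_prop),
    Real.log_div (by linarith [norm_nonneg a]) (by linarith)]

end IsSelfAdjoint

/-- `M₂(A)` carries no norm here: it enters through a ⋆-isomorphism `φ` onto a C⋆-algebra `B`,
which by uniqueness of the C⋆-norm computes `‖Ω‖` as `‖φ Ω‖`. -/
theorem log_norm_of_omega {A B : Type*} [CStarAlgebra A] [CStarAlgebra B] [PartialOrder B]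
    [StarOrderedRing B] (φ : Matrix (Fin 2) (Fin 2) A ≃⋆ₐ[ℂ] B)
    (z : A) (hz : ‖z‖ < 1)
    (Ω : Matrix (Fin 2) (Fin 2) A) (hΩ : Ω = !![0, star z; z, 0]) :
    ‖φ Ω‖ = ‖z‖ ∧
    IsUnit (1 - φ Ω * φ Ω) ∧
    0 ≤ Ring.inverse (1 - φ Ω * φ Ω) * ((1 + φ Ω) * (1 + φ Ω)) ∧
    IsUnit (Ring.inverse (1 - φ Ω * φ Ω) * ((1 + φ Ω) * (1 + φ Ω))) ∧
    ‖cfc Real.log (Ring.inverse (1 - φ Ω * φ Ω) * ((1 + φ Ω) * (1 + φ Ω)))‖ =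
      ‖cfc Real.log (1 + φ Ω) - cfc Real.log (1 - φ Ω)‖ ∧
    ‖cfc Real.log (1 + φ Ω) - cfc Real.log (1 - φ Ω)‖ =
      Real.log ((1 + ‖z‖) / (1 - ‖z‖)) := by
  subst hΩ
  have hb : IsSelfAdjoint (φ !![0, star z; z, 0]) := (Matrix.isSelfAdjoint_antidiag_star z).map φ
  have hbz := norm_map_antidiag_star φ z
  have h : ‖φ !![0, star z; z, 0]‖ < 1 := hbz ▸ hz
  have hsq : ‖φ !![0, star z; z, 0] * φ !![0, star z; z, 0]‖ < 1 :=
    (norm_mul_le _ _).trans_lt (mul_lt_one_of_nonneg_of_lt_one_left (norm_nonneg _) h h.le)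
  rw [hb.inverse_one_sub_mul_self_mul_eq_cfc h, hb.cfc_log_one_add_div_one_sub h,
    hb.norm_cfc_log_one_add_sub_cfc_log_one_sub h, hbz]
  exact ⟨rfl, (Units.oneSub _ hsq).isUnit,
    cfc_nonneg fun _ hx => (spectrum.one_add_div_one_sub_pos_of_mem h hx).le,
    (isUnit_cfc_iff _ _ (spectrum.continuousOn_one_add_div_one_sub h) hb).mpr fun _ hx => (spectrum.one_add_div_one_sub_pos_of_mem h hx).ne',
    rfl, rfl⟩
end
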